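/- Let (G_1, G_2) ~ CIRG(p, s), let π be a fixed permutation of [n], and condition on the event π_* = π. Let (M, μ) be any matching such that |{i ∈ M : μ(i) ≠ π(i)}| = d with d ≥ 1, define f(μ) := Σ_{i∈M : μ(i)≠π(i)} deg_{G_1∧_μ G_2}(i), and let k be a positive integer. Then for any θ > 0, P(f(μ) ≥ kd | π_* = π) ≤ 3 exp{ −d (θk − e^{2θ} p_max s² − n e^{6θ} p_max² s²) }. -/

import Mathlib

open MeasureTheory ProbabilityTheory Filter Real
open scoped ENNReal Classical

noncomputable section

namespace GraphMatching

variable {n : ℕ}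

/-- The ordered representative of the unordered pair `{i, j}`. -/
def eidx (i j : Fin n) : Fin n × Fin n := if i ≤ j then (i, j) else (j, i)

/-- A space of edge indicators, one for each (ordered) pair of vertices;
only the representatives with `i ≤ j` are ever read off. -/
abbrev EdgeSpace (n : ℕ) := Fin n × Fin n → Bool

instance (n : ℕ) : MeasurableSpace (Equiv.Perm (Fin n)) := ⊤

/-- Sample space of the correlated model: (parent edges, subsampling mask for `G₁`,
subsampling mask for `G₂'`) together with the random relabeling permutation. -/
abbrev Omega (n : ℕ) := (EdgeSpace n × EdgeSpace n × EdgeSpace n) × Equiv.Perm (Fin n)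

/-- Bernoulli measure on `Bool` with success probability `p` (clamped to `[0,1]`). -/
def bern (p : ℝ) : Measure Bool :=
  (PMF.bernoulli (min (Real.toNNReal p) 1) (min_le_right _ _)).toMeasure

/-- The law of an inhomogeneous random graph `G(p)`, encoded by independent edge
indicators with `P((i,j) present) = p i j` for the representative pairs. -/
def edgeMeasure (n : ℕ) (p : Fin n → Fin n → ℝ) : Measure (EdgeSpace n) :=
  Measure.pi fun e => bern (p e.1 e.2)

/-- The law of the correlated inhomogeneous random graph model `CIRG(p, s)`:
independent parent graph `G(p)`, two independent i.i.d.-`Bern(s)` subsampling masks,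
and an independent uniformly random permutation. -/
def CIRG (n : ℕ) (p : Fin n → Fin n → ℝ) (s : ℝ) : Measure (Omega n) :=
  ((edgeMeasure n p).prod
      ((edgeMeasure n fun _ _ => s).prod (edgeMeasure n fun _ _ => s))).prod
    (PMF.uniformOfFintype (Equiv.Perm (Fin n))).toMeasure

/-- Edge relation of the parent graph `G`. -/
def parentE (ω : Omega n) (i j : Fin n) : Prop := i ≠ j ∧ ω.1.1 (eidx i j) = true

/-- Edge relation of `G₁` (parent edges kept by the first mask). -/
def g1E (ω : Omega n) (i j : Fin n) : Prop := parentE ω i j ∧ ω.1.2.1 (eidx i j) = true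

/-- Edge relation of `G₂'` (parent edges kept by the second mask). -/
def g2'E (ω : Omega n) (i j : Fin n) : Prop := parentE ω i j ∧ ω.1.2.2 (eidx i j) = true

/-- Edge relation of `G₂`, obtained from `G₂'` by relabeling vertices via `π⋆ = ω.2`. -/
def g2E (ω : Omega n) (a b : Fin n) : Prop := g2'E ω (ω.2.symm a) (ω.2.symm b)

/-- The ground-truth permutation `π⋆`. -/
def piStar (ω : Omega n) : Equiv.Perm (Fin n) := ω.2

/-- Degree of `i` in the intersection graph `G₁ ∧_μ G₂` of the matching `(M, μ)`. -/
def interDeg (ω : Omega n) (M : Finset (Fin n)) (μ : Fin n → Fin n) (i : Fin n) : ℕ :=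
  (M.filter fun j => g1E ω i j ∧ g2E ω (μ i) (μ j)).card

/-- `(M, μ)` is a `k`-core matching: `μ` is injective on `M` and every vertex of the
intersection graph `G₁ ∧_μ G₂` has degree at least `k` there. -/
def IsKCoreMatching (ω : Omega n) (k : ℕ) (M : Finset (Fin n)) (μ : Fin n → Fin n) : Prop :=
  Set.InjOn μ M ∧ ∀ i ∈ M, k ≤ interDeg ω M μ i

/-- `(M, μ)` is a maximum-cardinality `k`-core matching. -/
def IsMaxKCoreMatching (ω : Omega n) (k : ℕ) (M : Finset (Fin n)) (μ : Fin n → Fin n) : Prop :=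
  IsKCoreMatching ω k M μ ∧ ∀ M' μ', IsKCoreMatching ω k M' μ' → M'.card ≤ M.card

/-- Vertex set of the `k`-core of the graph with adjacency relation `A`:
the union of all vertex sets inducing a subgraph of minimum degree at least `k`. -/
def coreVerts (n k : ℕ) (A : Fin n → Fin n → Prop) : Finset (Fin n) :=
  Finset.univ.filter fun i => ∃ S : Finset (Fin n), i ∈ S ∧
    ∀ v ∈ S, k ≤ (S.filter fun j => A v j).card

/-- Adjacency relation of the intersection graph `G₁ ∧_{π⋆} G₂` on all of `[n]`. -/
def interAdj (ω : Omega n) (i j : Fin n) : Prop := g1E ω i j ∧ g2E ω (ω.2 i) (ω.2 j)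

end GraphMatching

end

/-!
Conditionally on `π⋆ = π`, the model is a product of independent Bernoulli coordinates: the
parent edges and the two subsampling masks. With `σ = π⁻¹ ∘ μ`, a pair `{i, j}` of `M` is an edge
of `G₁ ∧_μ G₂` exactly when four coordinates are present: the parent edges `{i, j}` and
`{σ i, σ j}`, the first mask on `{i, j}` and the second mask on `{σ i, σ j}`. Hence `f(μ)` is at
most twice the number of these events that occur among the pairs touching a mismatched vertex.
There are at most `d` pairs fixed by `σ`, each of probability at most `p_max s²`, and at most
`d n` other pairs, each of probability at most `p_max² s²`.

Two such events can share a coordinate only if one pair is the `σ`-image of the other. Since `σ`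
is injective on `M`, this conflict graph has maximum degree two, so it is 3-colourable, and each
colour class together with the fixed pairs is a family of independent events. If `f(μ) ≥ k d`,
then one colour class carries at least a third of the moved-pair count, and the Chernoff bound
`P(X ≥ k d) ≤ e^{-θ k d} E[e^{θ X}]` for that class gives the estimate; the union over the three
classes gives the factor `3`.
-/

open Finset Function

namespace MeasureTheory.Measure

variable {ι : Type*} [Fintype ι] {X : ι → Type*} [∀ i, MeasurableSpace (X i)]
  (ν : ∀ i, Measure (X i)) [∀ i, IsProbabilityMeasure (ν i)]

lemma iIndepSet_pi_of_pairwise_disjoint {J : Type*} (K : J → Finset ι)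
    (hK : Pairwise (Disjoint on K)) {B : ∀ i, Set (X i)} (hB : ∀ i, MeasurableSet (B i)) :
    iIndepSet (fun j => (K j : Set ι).pi B) (Measure.pi ν) := by
  rw [iIndepSet_iff_meas_biInter fun j => .pi (K j).countable_toSet fun i _ => hB i]
  intro s
  have hinter : ⋂ j ∈ s, (K j : Set ι).pi B = (s.biUnion K : Set ι).pi B := by
    ext x
    simp only [Set.mem_iInter, Set.mem_pi, coe_biUnion, Set.mem_iUnion, mem_coe, exists_prop]
    grind
  rw [hinter, pi_pi_finset, prod_biUnion (hK.set_pairwise _)]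
  exact prod_congr rfl fun j _ => (pi_pi_finset ν _ _).symm

end MeasureTheory.Measure

lemma ENNReal.one_add_ofReal_exp_sub_one_mul_le {x b : ℝ} {m : ℝ≥0∞} (hx : 0 ≤ x) (hb : 0 ≤ b)
    (hm : m ≤ ENNReal.ofReal b) :
    1 + ENNReal.ofReal (Real.exp x - 1) * m ≤ ENNReal.ofReal (Real.exp (Real.exp x * b)) := by
  have hc : 0 ≤ Real.exp x - 1 := sub_nonneg.2 (Real.one_le_exp hx)
  calc 1 + ENNReal.ofReal (Real.exp x - 1) * m
      ≤ 1 + ENNReal.ofReal (Real.exp x - 1) * ENNReal.ofReal b := by gcongr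
    _ = ENNReal.ofReal (1 + (Real.exp x - 1) * b) := by
      rw [ENNReal.ofReal_add zero_le_one (mul_nonneg hc hb), ENNReal.ofReal_one,
        ENNReal.ofReal_mul hc]
    _ ≤ ENNReal.ofReal (Real.exp (Real.exp x * b)) := ENNReal.ofReal_le_ofReal <|
      ((add_comm _ _).trans_le (Real.add_one_le_exp _)).trans (Real.exp_le_exp.2 (by linarith))

namespace ProbabilityTheory

lemma cond_prod_snd_eq_apply {α β : Type*} [MeasurableSpace α] [MeasurableSpace β]
    [MeasurableSingletonClass β] (μ : Measure α) [IsProbabilityMeasure μ] (ν : Measure β)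
    [SFinite ν] {b : β} (hb₀ : ν {b} ≠ 0) (hb : ν {b} ≠ ∞) (S : Set (α × β)) :
    (μ.prod ν)[S | {ω | ω.2 = b}] = μ {x | (x, b) ∈ S} := by
  have hfiber : {ω : α × β | ω.2 = b} = Set.univ ×ˢ {b} := by ext; simp
  have hinter : {ω : α × β | ω.2 = b} ∩ S = {x | (x, b) ∈ S} ×ˢ {b} := by
    ext ⟨x, y⟩
    simp only [Set.mem_inter_iff, Set.mem_prod, Set.mem_singleton_iff]
    grind
  rw [cond_apply (hfiber ▸ MeasurableSet.univ.prod (measurableSet_singleton b)), hinter, hfiber,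
    Measure.prod_prod, Measure.prod_prod, measure_univ, one_mul, mul_comm, mul_assoc,
    ENNReal.mul_inv_cancel hb₀ hb, mul_one]

variable {Ω ι : Type*} [MeasurableSpace Ω] {μ : Measure Ω} {A : ι → Set Ω}

lemma lintegral_prod_one_add_mul_indicator_of_iIndepSet (hA : ∀ i, MeasurableSet (A i))
    {S : Finset ι} (hind : iIndepSet (fun i : S => A i) μ) (c : ι → ℝ≥0∞) :
    ∫⁻ ω, ∏ i ∈ S, (1 + c i * (A i).indicator 1 ω) ∂μ = ∏ i ∈ S, (1 + c i * μ (A i)) := by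
  have := hind.isProbabilityMeasure
  set g : ι → Ω → ℝ≥0∞ := fun i ω => 1 + c i * (A i).indicator 1 ω
  have hmeas : ∀ i, Measurable (g i) :=
    fun i => ((measurable_one.indicator (hA i)).const_mul _).const_add _
  have hfun : iIndepFun (fun (i : S) => g i) μ :=
    hind.iIndepFun_indicator.comp (fun i x => 1 + c i * x) fun i => by fun_prop
  calc ∫⁻ ω, ∏ i ∈ S, g i ω ∂μ = ∫⁻ ω, ∏ i : S, g i ω ∂μ :=
        lintegral_congr fun ω => (prod_coe_sort S fun i => g i ω).symm
    _ = ∏ i : S, ∫⁻ ω, g i ω ∂μ :=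
        lintegral_prod_eq_prod_lintegral_of_indepFun _ _ hfun fun i => hmeas i
    _ = ∏ i ∈ S, (1 + c i * μ (A i)) := by
        rw [prod_coe_sort S fun i => ∫⁻ ω, g i ω ∂μ]
        refine prod_congr rfl fun i _ => ?_
        rw [lintegral_add_right _ ((measurable_one.indicator (hA i)).const_mul _),
          lintegral_const_mul _ (measurable_one.indicator (hA i)), lintegral_indicator_one (hA i),
          lintegral_const, measure_univ, mul_one]

theorem measure_le_sum_indicator_le_of_iIndepSet (hA : ∀ i, MeasurableSet (A i))
    {S : Finset ι} (hind : iIndepSet (fun i : S => A i) μ) {a b : ι → ℝ} (ha : ∀ i ∈ S, 0 ≤ a i)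
    (hb0 : ∀ i ∈ S, 0 ≤ b i) (hb : ∀ i ∈ S, μ (A i) ≤ ENNReal.ofReal (b i))
    {θ : ℝ} (hθ : 0 ≤ θ) (τ : ℝ) :
    μ {ω | τ ≤ ∑ i ∈ S, (A i).indicator (fun _ => a i) ω} ≤
      ENNReal.ofReal (Real.exp (-(θ * τ) + ∑ i ∈ S, Real.exp (θ * a i) * b i)) := by
  set c : ι → ℝ≥0∞ := fun i => ENNReal.ofReal (Real.exp (θ * a i) - 1)
  -- `W = exp (θ X)`, written as a product of functions of the independent indicators
  set W : Ω → ℝ≥0∞ := fun ω => ∏ i ∈ S, (1 + c i * (A i).indicator 1 ω)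
  have hexp_sub_one : ∀ i ∈ S, 0 ≤ Real.exp (θ * a i) - 1 :=
    fun i hi => sub_nonneg.2 (Real.one_le_exp (mul_nonneg hθ (ha i hi)))
  have hW : ∀ ω, W ω =
      ENNReal.ofReal (Real.exp (θ * ∑ i ∈ S, (A i).indicator (fun _ => a i) ω)) := by
    intro ω
    rw [mul_sum, Real.exp_sum, ENNReal.ofReal_prod_of_nonneg fun _ _ => (Real.exp_pos _).le]
    refine prod_congr rfl fun i hi => ?_
    by_cases h : ω ∈ A i
    · rw [Set.indicator_of_mem h, Set.indicator_of_mem h, Pi.one_apply, mul_one,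
        ← ENNReal.ofReal_one, ← ENNReal.ofReal_add zero_le_one (hexp_sub_one i hi)]
      ring_nf
    · simp [Set.indicator_of_notMem h]
  have hsub : {ω | τ ≤ ∑ i ∈ S, (A i).indicator (fun _ => a i) ω} ⊆
      {ω | ENNReal.ofReal (Real.exp (θ * τ)) ≤ W ω} := fun ω hω => by
    show _ ≤ W ω
    rw [hW]
    exact ENNReal.ofReal_le_ofReal (Real.exp_le_exp.2 (mul_le_mul_of_nonneg_left hω hθ))
  have hWmeas : Measurable W := Finset.measurable_prod _ fun i _ =>
    ((measurable_one.indicator (hA i)).const_mul _).const_add _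
  calc μ {ω | τ ≤ ∑ i ∈ S, (A i).indicator (fun _ => a i) ω}
      ≤ μ {ω | ENNReal.ofReal (Real.exp (θ * τ)) ≤ W ω} := measure_mono hsub
    _ ≤ (∫⁻ ω, W ω ∂μ) / ENNReal.ofReal (Real.exp (θ * τ)) :=
      meas_ge_le_lintegral_div hWmeas.aemeasurable (by simp [Real.exp_pos]) ENNReal.ofReal_ne_top
    _ = (∏ i ∈ S, (1 + c i * μ (A i))) / ENNReal.ofReal (Real.exp (θ * τ)) := by
      rw [lintegral_prod_one_add_mul_indicator_of_iIndepSet hA hind]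
    _ ≤ (∏ i ∈ S, ENNReal.ofReal (Real.exp (Real.exp (θ * a i) * b i))) /
          ENNReal.ofReal (Real.exp (θ * τ)) := by
      gcongr with i hi
      exact ENNReal.one_add_ofReal_exp_sub_one_mul_le (mul_nonneg hθ (ha i hi)) (hb0 i hi)
        (hb i hi)
    _ = ENNReal.ofReal (Real.exp (-(θ * τ) + ∑ i ∈ S, Real.exp (θ * a i) * b i)) := by
      rw [← ENNReal.ofReal_prod_of_nonneg fun _ _ => (Real.exp_pos _).le, ← Real.exp_sum,
        ← ENNReal.ofReal_div_of_pos (Real.exp_pos _), ← Real.exp_sub, neg_add_eq_sub]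

end ProbabilityTheory

lemma SimpleGraph.exists_coloring_of_degree_le {V : Type*} (G : SimpleGraph V)
    [DecidableRel G.Adj] (s : Finset V) {k : ℕ} (hdeg : ∀ v ∈ s, #{u ∈ s | G.Adj v u} ≤ k) :
    ∃ χ : V → Fin (k + 1), ∀ u ∈ s, ∀ v ∈ s, G.Adj u v → χ u ≠ χ v := by
  induction s using Finset.induction with
  | empty => exact ⟨fun _ => 0, by simp⟩
  | @insert a s ha ih =>
    have hsub : ∀ v, #{u ∈ s | G.Adj v u} ≤ #{u ∈ insert a s | G.Adj v u} :=
      fun v => card_le_card (filter_subset_filter _ (subset_insert a s))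
    obtain ⟨χ, hχ⟩ := ih fun v hv => (hsub v).trans (hdeg v (mem_insert_of_mem hv))
    obtain ⟨c, hc⟩ : ∃ c, c ∉ {u ∈ s | G.Adj a u}.image χ := by
      by_contra! h
      have := (card_le_card fun c (_ : c ∈ univ) => h c).trans
        (card_image_le.trans ((hsub a).trans (hdeg a (mem_insert_self a s))))
      simp at this
    have hne : ∀ v ∈ s, v ≠ a := fun v hv h => ha (h ▸ hv)
    refine ⟨update χ a c, fun u hu v hv huv => ?_⟩
    rcases mem_insert.1 hu with rfl | hu' <;> rcases mem_insert.1 hv with rfl | hv'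
    · exact absurd huv G.irrefl
    · rw [update_self, update_of_ne (hne v hv')]
      exact fun h => hc (h ▸ mem_image_of_mem χ (mem_filter.2 ⟨hv', huv⟩))
    · rw [update_self, update_of_ne (hne u hu')]
      exact fun h => hc (h ▸ mem_image_of_mem χ (mem_filter.2 ⟨hu', huv.symm⟩))
    · rw [update_of_ne (hne u hu'), update_of_ne (hne v hv')]
      exact hχ u hu' v hv' huv

namespace GraphMatching

variable {n : ℕ}

lemma eidx_comm (i j : Fin n) : eidx i j = eidx j i := by
  rcases lt_trichotomy i j with h | rfl | h
  · simp [eidx, h.le, not_le.2 h]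
  · rfl
  · simp [eidx, h.le, not_le.2 h]

lemma eidx_eq_eidx_iff {a b c d : Fin n} :
    eidx a b = eidx c d ↔ (a = c ∧ b = d) ∨ (a = d ∧ b = c) := by
  constructor
  · unfold eidx
    split_ifs <;> simp only [Prod.mk.injEq] <;> tauto
  · rintro (⟨rfl, rfl⟩ | ⟨rfl, rfl⟩)
    · rfl
    · exact eidx_comm _ _

/-- Coordinates of the three edge-indicator arrays: parent graph, mask of `G₁`, mask of `G₂'`. -/
abbrev EdgeCoord (n : ℕ) := (Fin n × Fin n) ⊕ ((Fin n × Fin n) ⊕ (Fin n × Fin n))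

def coordProb (p : Fin n → Fin n → ℝ) (s : ℝ) : EdgeCoord n → ℝ :=
  Sum.elim (fun e => p e.1 e.2) fun _ => s

noncomputable def coordMeasure (n : ℕ) (p : Fin n → Fin n → ℝ) (s : ℝ) :
    Measure (EdgeCoord n → Bool) :=
  Measure.pi fun c => bern (coordProb p s c)

def toEdgeData (y : EdgeCoord n → Bool) : EdgeSpace n × EdgeSpace n × EdgeSpace n :=
  (fun e => y (.inl e), fun e => y (.inr (.inl e)), fun e => y (.inr (.inr e)))

instance (p : ℝ) : IsProbabilityMeasure (bern p) := PMF.toMeasure.isProbabilityMeasure _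

instance (p : Fin n → Fin n → ℝ) : IsProbabilityMeasure (edgeMeasure n p) := by
  unfold edgeMeasure; infer_instance

lemma measurePreserving_toEdgeData (p : Fin n → Fin n → ℝ) (s : ℝ) :
    MeasurePreserving toEdgeData (coordMeasure n p s)
      ((edgeMeasure n p).prod ((edgeMeasure n fun _ _ => s).prod (edgeMeasure n fun _ _ => s))) :=
  have hsplit := (measurePreserving_sumPiEquivProdPi_symm fun c : EdgeCoord n =>
    bern (coordProb p s c)).symm (MeasurableEquiv.sumPiEquivProdPi _).symm
  have hmasks := (measurePreserving_sumPiEquivProdPi_symm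
    fun c : (Fin n × Fin n) ⊕ (Fin n × Fin n) =>
      bern (coordProb p s (.inr c))).symm (MeasurableEquiv.sumPiEquivProdPi _).symm
  ((MeasurePreserving.id (edgeMeasure n p)).prod hmasks).comp hsplit

lemma cond_CIRG_apply (p : Fin n → Fin n → ℝ) (s : ℝ) (π₀ : Equiv.Perm (Fin n))
    (S : Set (Omega n)) :
    (CIRG n p s)[S | {ω | ω.2 = π₀}] = coordMeasure n p s {y | (toEdgeData y, π₀) ∈ S} := by
  have hunif : (PMF.uniformOfFintype (Equiv.Perm (Fin n))).toMeasure {π₀} =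
      (Fintype.card (Equiv.Perm (Fin n)) : ℝ≥0∞)⁻¹ := by
    rw [PMF.toMeasure_apply_singleton _ _ (measurableSet_singleton _), PMF.uniformOfFintype_apply]
  rw [CIRG, cond_prod_snd_eq_apply _ _ (by simp [hunif]) (by simp [hunif]),
    ← (measurePreserving_toEdgeData p s).measure_preimage
      (Set.toFinite _).measurableSet.nullMeasurableSet]
  rfl

section Alignment

variable (π₀ : Equiv.Perm (Fin n)) (M : Finset (Fin n)) (μ : Fin n → Fin n)

def twist (i : Fin n) : Fin n := π₀.symm (μ i)

/-- `μ` matches the pair `q` of `G₁` with `{μ q.1, μ q.2}` in `G₂`, which is this pair in the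
labels of `G₂'`. -/
def alignedPair (q : Fin n × Fin n) : Fin n × Fin n := eidx (twist π₀ μ q.1) (twist π₀ μ q.2)

/-- The coordinates that must all be `true` for the pair `q` to be an edge of `G₁ ∧_μ G₂`. -/
def edgeBlock (q : Fin n × Fin n) : Finset (EdgeCoord n) :=
  {.inl q, .inl (alignedPair π₀ μ q), .inr (.inl q), .inr (.inr (alignedPair π₀ μ q))}

def edgeEvent (q : Fin n × Fin n) : Set (EdgeCoord n → Bool) :=
  (edgeBlock π₀ μ q : Set (EdgeCoord n)).pi fun _ => {true}

def mismatches : Finset (Fin n) := {i ∈ M | μ i ≠ π₀ i}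

def candidatePairs : Finset (Fin n × Fin n) :=
  {z ∈ mismatches π₀ M μ ×ˢ M | z.1 ≠ z.2}.image fun z => eidx z.1 z.2

def fixedPairs : Finset (Fin n × Fin n) := {q ∈ candidatePairs π₀ M μ | alignedPair π₀ μ q = q}

def movedPairs : Finset (Fin n × Fin n) := {q ∈ candidatePairs π₀ M μ | alignedPair π₀ μ q ≠ q}

/-- Adjacent pairs are those whose edge events share a parent-edge coordinate. -/
def conflictGraph : SimpleGraph (Fin n × Fin n) :=
  SimpleGraph.fromRel fun q q' => alignedPair π₀ μ q = q'

lemma alignedPair_eidx (i j : Fin n) :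
    alignedPair π₀ μ (eidx i j) = eidx (twist π₀ μ i) (twist π₀ μ j) := by
  by_cases h : i ≤ j
  · simp only [alignedPair, eidx.eq_1 i j, if_pos h]
  · simp only [alignedPair, eidx.eq_1 i j, if_neg h]
    exact eidx_comm _ _

lemma mem_edgeEvent {q : Fin n × Fin n} {y : EdgeCoord n → Bool} :
    y ∈ edgeEvent π₀ μ q ↔ y (.inl q) = true ∧ y (.inl (alignedPair π₀ μ q)) = true ∧
      y (.inr (.inl q)) = true ∧ y (.inr (.inr (alignedPair π₀ μ q))) = true := by
  simp [edgeEvent, edgeBlock]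

variable {π₀ M μ}

lemma mem_candidatePairs {q : Fin n × Fin n} :
    q ∈ candidatePairs π₀ M μ ↔ ∃ i ∈ mismatches π₀ M μ, ∃ j ∈ M, i ≠ j ∧ eidx i j = q := by
  simp [candidatePairs, and_assoc]

lemma twist_ne_of_mem_mismatches {i : Fin n} (hi : i ∈ mismatches π₀ M μ) : twist π₀ μ i ≠ i :=
  fun h => (mem_filter.1 hi).2 (π₀.symm_apply_eq.1 h)

lemma twist_injOn (hinj : Set.InjOn μ M) : Set.InjOn (twist π₀ μ) M :=
  fun _ hi _ hj h => hinj hi hj (π₀.symm.injective h)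

lemma interDeg_toEdgeData (hinj : Set.InjOn μ M) (y : EdgeCoord n → Bool) {i : Fin n}
    (hi : i ∈ M) :
    interDeg (toEdgeData y, π₀) M μ i = #{j ∈ M | i ≠ j ∧ y ∈ edgeEvent π₀ μ (eidx i j)} := by
  refine congrArg card (filter_congr fun j hj => ?_)
  have htw : π₀.symm (μ i) ≠ π₀.symm (μ j) ↔ i ≠ j := (twist_injOn hinj).ne_iff hi hj
  rw [mem_edgeEvent, alignedPair_eidx]
  simp only [g1E, g2E, g2'E, parentE, toEdgeData, twist]
  tauto

lemma sum_interDeg_le (hinj : Set.InjOn μ M) (y : EdgeCoord n → Bool) :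
    ∑ i ∈ mismatches π₀ M μ, interDeg (toEdgeData y, π₀) M μ i ≤
      2 * #{q ∈ candidatePairs π₀ M μ | y ∈ edgeEvent π₀ μ q} := by
  calc ∑ i ∈ mismatches π₀ M μ, interDeg (toEdgeData y, π₀) M μ i
      = #{z ∈ mismatches π₀ M μ ×ˢ M | z.1 ≠ z.2 ∧ y ∈ edgeEvent π₀ μ (eidx z.1 z.2)} := by
        rw [card_filter, sum_product]
        refine sum_congr rfl fun i hi => ?_
        rw [interDeg_toEdgeData hinj y (filter_subset _ _ hi), card_filter]
    _ ≤ 2 * #{q ∈ candidatePairs π₀ M μ | y ∈ edgeEvent π₀ μ q} := by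
        refine card_le_mul_card_image_of_maps_to (f := fun z => eidx z.1 z.2) ?_ 2 ?_
        · intro z hz
          rw [mem_filter] at hz ⊢
          exact ⟨mem_image_of_mem _ (mem_filter.2 ⟨hz.1, hz.2.1⟩), hz.2.2⟩
        · intro q _
          refine (card_le_card fun z hz => ?_).trans (card_insert_le q {q.swap})
          obtain ⟨-, hzq⟩ := mem_filter.1 hz
          rw [mem_insert, mem_singleton, Prod.ext_iff, Prod.ext_iff, ← hzq]
          unfold eidx
          split_ifs <;> simp

lemma card_candidatePairs_le : #(candidatePairs π₀ M μ) ≤ #(mismatches π₀ M μ) * n :=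
  card_image_le.trans <| (card_filter_le _ _).trans <| by
    rw [card_product]
    exact Nat.mul_le_mul_left _ (card_le_univ M |>.trans_eq (Fintype.card_fin n))

lemma card_fixedPairs_le : #(fixedPairs π₀ M μ) ≤ #(mismatches π₀ M μ) := by
  refine (card_le_card fun q hq => ?_).trans
    (card_image_le (s := mismatches π₀ M μ) (f := fun i => eidx i (twist π₀ μ i)))
  obtain ⟨hq, hfix⟩ := mem_filter.1 hq
  obtain ⟨i, hi, j, -, -, rfl⟩ := mem_candidatePairs.1 hq
  rw [alignedPair_eidx, eidx_eq_eidx_iff] at hfix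
  rcases hfix with ⟨h, -⟩ | ⟨h, -⟩
  · exact absurd h (twist_ne_of_mem_mismatches hi)
  · exact mem_image.2 ⟨i, hi, by rw [h]⟩

lemma alignedPair_injOn (hinj : Set.InjOn μ M) :
    Set.InjOn (alignedPair π₀ μ) (candidatePairs π₀ M μ) := by
  rintro _ hq _ hq' h
  obtain ⟨i, hi, j, hj, -, rfl⟩ := mem_candidatePairs.1 hq
  obtain ⟨i', hi', j', hj', -, rfl⟩ := mem_candidatePairs.1 hq'
  have hmis : mismatches π₀ M μ ⊆ M := filter_subset _ _
  have htw := twist_injOn (π₀ := π₀) hinj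
  rw [alignedPair_eidx, alignedPair_eidx, eidx_eq_eidx_iff] at h
  rw [eidx_eq_eidx_iff]
  rcases h with ⟨h₁, h₂⟩ | ⟨h₁, h₂⟩
  · exact .inl ⟨htw (hmis hi) (hmis hi') h₁, htw hj hj' h₂⟩
  · exact .inr ⟨htw (hmis hi) hj' h₁, htw hj (hmis hi') h₂⟩

lemma card_conflictGraph_adj_le (hinj : Set.InjOn μ M) (q : Fin n × Fin n) :
    #{u ∈ candidatePairs π₀ M μ | (conflictGraph π₀ μ).Adj q u} ≤ 2 := by
  have hpre : #{u ∈ candidatePairs π₀ M μ | alignedPair π₀ μ u = q} ≤ 1 :=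
    card_le_one.2 fun a ha b hb => alignedPair_injOn hinj (mem_filter.1 ha).1 (mem_filter.1 hb).1
      ((mem_filter.1 ha).2.trans (mem_filter.1 hb).2.symm)
  refine (card_le_card fun u hu => ?_).trans
    ((card_insert_le (alignedPair π₀ μ q) _).trans (Nat.succ_le_succ hpre))
  obtain ⟨hu, -, h | h⟩ := mem_filter.1 hu
  · exact mem_insert.2 (.inl h.symm)
  · exact mem_insert_of_mem (mem_filter.2 ⟨hu, h⟩)

lemma not_conflictGraph_adj_of_mem_fixedPairs (hinj : Set.InjOn μ M) {q q' : Fin n × Fin n}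
    (hq : q ∈ fixedPairs π₀ M μ) (hq' : q' ∈ candidatePairs π₀ M μ) :
    ¬ (conflictGraph π₀ μ).Adj q q' := by
  obtain ⟨hq, hfix⟩ := mem_filter.1 hq
  rintro ⟨hne, h | h⟩
  · exact hne (hfix.symm.trans h)
  · exact hne (alignedPair_injOn hinj hq hq' (hfix.trans h.symm))

lemma disjoint_edgeBlock (hinj : Set.InjOn μ M) {q q' : Fin n × Fin n}
    (hq : q ∈ candidatePairs π₀ M μ) (hq' : q' ∈ candidatePairs π₀ M μ) (hne : q ≠ q')
    (hadj : ¬ (conflictGraph π₀ μ).Adj q q') :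
    Disjoint (edgeBlock π₀ μ q) (edgeBlock π₀ μ q') := by
  have haligned : alignedPair π₀ μ q ≠ alignedPair π₀ μ q' :=
    fun h => hne (alignedPair_injOn hinj hq hq' h)
  simp only [conflictGraph, SimpleGraph.fromRel_adj, not_and, not_or] at hadj
  obtain ⟨h₁, h₂⟩ := hadj hne
  simp only [edgeBlock, disjoint_insert_left, disjoint_insert_right, mem_insert, mem_singleton,
    disjoint_singleton, ne_eq, Sum.inl.injEq, Sum.inr.injEq, reduceCtorEq]
  grind

end Alignment

section EdgeProbabilities

variable {p : Fin n → Fin n → ℝ} {s : ℝ} {π₀ : Equiv.Perm (Fin n)} {μ : Fin n → Fin n}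

noncomputable def maxProb (p : Fin n → Fin n → ℝ) : ℝ := ⨆ e : Fin n × Fin n, p e.1 e.2

variable (p s π₀ μ) in
noncomputable def edgeProbBound (q : Fin n × Fin n) : ℝ :=
  if alignedPair π₀ μ q = q then maxProb p * s ^ 2 else maxProb p ^ 2 * s ^ 2

lemma maxProb_nonneg (hp0 : ∀ i j, 0 ≤ p i j) : 0 ≤ maxProb p :=
  Real.iSup_nonneg fun e => hp0 e.1 e.2

lemma bern_true_le (r : ℝ) : bern r {true} ≤ ENNReal.ofReal r := by
  rw [bern, PMF.toMeasure_apply_singleton _ _ (measurableSet_singleton _)]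
  exact ENNReal.coe_le_coe.2 (min_le_left _ _)

lemma bern_coordProb_inl_le (e : Fin n × Fin n) :
    bern (coordProb p s (.inl e)) {true} ≤ ENNReal.ofReal (maxProb p) :=
  (bern_true_le _).trans <| ENNReal.ofReal_le_ofReal <|
    le_ciSup (f := fun e : Fin n × Fin n => p e.1 e.2) (Set.finite_range _).bddAbove e

lemma coordMeasure_edgeEvent_le (hp0 : ∀ i j, 0 ≤ p i j) (hs0 : 0 ≤ s) (q : Fin n × Fin n) :
    coordMeasure n p s (edgeEvent π₀ μ q) ≤ ENNReal.ofReal (edgeProbBound p s π₀ μ q) := by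
  have hpm := maxProb_nonneg hp0
  rw [coordMeasure, edgeEvent, Measure.pi_pi_finset, edgeProbBound]
  split_ifs with hq
  · rw [edgeBlock, hq, insert_idem, prod_insert (by simp), prod_insert (by simp), prod_singleton,
      ENNReal.ofReal_mul hpm, sq, ENNReal.ofReal_mul hs0]
    gcongr
    exacts [bern_coordProb_inl_le q, bern_true_le s, bern_true_le s]
  · rw [edgeBlock, prod_insert (by simp [Ne.symm hq]), prod_insert (by simp),
      prod_insert (by simp), prod_singleton, ENNReal.ofReal_mul (sq_nonneg _), sq, sq,
      ENNReal.ofReal_mul hpm, ENNReal.ofReal_mul hs0, ← mul_assoc]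
    gcongr
    exacts [bern_coordProb_inl_le q, bern_coordProb_inl_le _, bern_true_le s, bern_true_le s]

end EdgeProbabilities

section ColourClasses

variable {p : Fin n → Fin n → ℝ} {s : ℝ} {π₀ : Equiv.Perm (Fin n)} {M : Finset (Fin n)}
  {μ : Fin n → Fin n} {χ : Fin n × Fin n → Fin 3}

variable (π₀ M μ) in
def classPairs (χ : Fin n × Fin n → Fin 3) (t : Fin 3) : Finset (Fin n × Fin n) :=
  fixedPairs π₀ M μ ∪ {q ∈ movedPairs π₀ M μ | χ q = t}

variable (π₀ μ) in
/-- Each pair is counted at most twice in `f(μ)`; a moved pair is charged three times more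
because only one of the three colour classes of moved pairs enters a single Chernoff bound. -/
def pairWeight (q : Fin n × Fin n) : ℝ := if alignedPair π₀ μ q = q then 2 else 6

variable (π₀ M μ) in
def classEvent (χ : Fin n × Fin n → Fin 3) (t : Fin 3) (τ : ℝ) : Set (EdgeCoord n → Bool) :=
  {y | τ ≤ ∑ q ∈ classPairs π₀ M μ χ t,
    (edgeEvent π₀ μ q).indicator (fun _ => pairWeight π₀ μ q) y}

lemma sum_classPairs (t : Fin 3) (g : Fin n × Fin n → ℝ) :
    ∑ q ∈ classPairs π₀ M μ χ t, g q =
      ∑ q ∈ fixedPairs π₀ M μ, g q + ∑ q ∈ movedPairs π₀ M μ with χ q = t, g q :=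
  sum_union ((disjoint_filter_filter_not _ _ _).mono_right (filter_subset _ _))

lemma classPairs_subset (t : Fin 3) : classPairs π₀ M μ χ t ⊆ candidatePairs π₀ M μ :=
  union_subset (filter_subset _ _) ((filter_subset _ _).trans (filter_subset _ _))

lemma exists_mem_classEvent (hinj : Set.InjOn μ M) (χ : Fin n × Fin n → Fin 3)
    (y : EdgeCoord n → Bool) {K : ℕ}
    (hK : K ≤ ∑ i ∈ mismatches π₀ M μ, interDeg (toEdgeData y, π₀) M μ i) :
    ∃ t, y ∈ classEvent π₀ M μ χ t K := by
  set N : Fin n × Fin n → ℕ := fun q => if y ∈ edgeEvent π₀ μ q then 1 else 0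
  set G : Fin 3 → ℕ := fun t => ∑ q ∈ movedPairs π₀ M μ with χ q = t, N q
  obtain ⟨t, ht⟩ := Finite.exists_max G
  refine ⟨t, ?_⟩
  have hcount : K ≤ 2 * ∑ q ∈ fixedPairs π₀ M μ, N q + 6 * G t := by
    have hsplit : #{q ∈ candidatePairs π₀ M μ | y ∈ edgeEvent π₀ μ q} =
        ∑ q ∈ fixedPairs π₀ M μ, N q + ∑ t', G t' := by
      rw [card_filter, ← sum_filter_add_sum_filter_not _ fun q => alignedPair π₀ μ q = q,
        sum_fiberwise]
      rfl
    have hmax : ∑ t', G t' ≤ 3 * G t :=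
      (sum_le_card_nsmul univ G (G t) fun t' _ => ht t').trans_eq (by simp)
    have := sum_interDeg_le (π₀ := π₀) hinj y
    omega
  have hterm : ∀ q, (edgeEvent π₀ μ q).indicator (fun _ => pairWeight π₀ μ q) y =
      pairWeight π₀ μ q * N q := fun q => by
    simp only [Set.indicator_apply, N]
    split_ifs <;> simp
  have hsum : ∑ q ∈ classPairs π₀ M μ χ t,
      (edgeEvent π₀ μ q).indicator (fun _ => pairWeight π₀ μ q) y =
        2 * (∑ q ∈ fixedPairs π₀ M μ, N q : ℕ) + 6 * (G t : ℕ) := by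
    simp only [sum_classPairs, hterm, G, Nat.cast_sum, mul_sum]
    congr 1 <;> refine sum_congr rfl fun q hq => ?_
    · rw [pairWeight, if_pos (mem_filter.1 hq).2]
    · rw [pairWeight, if_neg (mem_filter.1 (mem_filter.1 hq).1).2]
  show (K : ℝ) ≤ _
  rw [hsum]
  exact_mod_cast hcount

lemma iIndepSet_edgeEvent_classPairs (hinj : Set.InjOn μ M)
    (hχ : ∀ u ∈ movedPairs π₀ M μ, ∀ v ∈ movedPairs π₀ M μ, (conflictGraph π₀ μ).Adj u v →
      χ u ≠ χ v) (p : Fin n → Fin n → ℝ) (s : ℝ) (t : Fin 3) :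
    iIndepSet (fun q : classPairs π₀ M μ χ t => edgeEvent π₀ μ q) (coordMeasure n p s) := by
  have hS := classPairs_subset (π₀ := π₀) (M := M) (μ := μ) (χ := χ) t
  refine Measure.iIndepSet_pi_of_pairwise_disjoint _ _ ?_ fun _ => measurableSet_singleton true
  rintro ⟨q, hq⟩ ⟨q', hq'⟩ hne
  refine disjoint_edgeBlock hinj (hS hq) (hS hq') (fun h => hne (Subtype.ext h)) ?_
  rcases mem_union.1 hq with hq | hq
  · exact not_conflictGraph_adj_of_mem_fixedPairs hinj hq (hS hq')
  rcases mem_union.1 hq' with hq' | hq'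
  · exact fun h => not_conflictGraph_adj_of_mem_fixedPairs hinj hq' (hS (mem_union_right _ hq))
      h.symm
  obtain ⟨hmq, rfl⟩ := mem_filter.1 hq
  obtain ⟨hmq', h'⟩ := mem_filter.1 hq'
  exact fun h => hχ _ hmq _ hmq' h h'.symm

lemma sum_exp_mul_edgeProbBound_le (hp0 : ∀ i j, 0 ≤ p i j) (t : Fin 3) (θ : ℝ) :
    ∑ q ∈ classPairs π₀ M μ χ t, Real.exp (θ * pairWeight π₀ μ q) * edgeProbBound p s π₀ μ q ≤
      #(mismatches π₀ M μ) * (Real.exp (2 * θ) * maxProb p * s ^ 2) +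
        #(mismatches π₀ M μ) * n * (Real.exp (6 * θ) * maxProb p ^ 2 * s ^ 2) := by
  have hpm := maxProb_nonneg hp0
  have hfixed : ∑ q ∈ fixedPairs π₀ M μ,
      Real.exp (θ * pairWeight π₀ μ q) * edgeProbBound p s π₀ μ q =
        #(fixedPairs π₀ M μ) * (Real.exp (2 * θ) * maxProb p * s ^ 2) := by
    rw [← nsmul_eq_mul, ← sum_const]
    refine sum_congr rfl fun q hq => ?_
    simp only [pairWeight, edgeProbBound, if_pos (mem_filter.1 hq).2]
    ring_nf
  have hmoved : ∑ q ∈ movedPairs π₀ M μ with χ q = t,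
      Real.exp (θ * pairWeight π₀ μ q) * edgeProbBound p s π₀ μ q =
        #{q ∈ movedPairs π₀ M μ | χ q = t} * (Real.exp (6 * θ) * maxProb p ^ 2 * s ^ 2) := by
    rw [← nsmul_eq_mul, ← sum_const]
    refine sum_congr rfl fun q hq => ?_
    simp only [pairWeight, edgeProbBound, if_neg (mem_filter.1 (mem_filter.1 hq).1).2]
    ring_nf
  rw [sum_classPairs, hfixed, hmoved]
  gcongr
  · exact_mod_cast card_fixedPairs_le
  · exact_mod_cast (card_le_card ((filter_subset _ _).trans (filter_subset _ _))).trans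
      card_candidatePairs_le

lemma coordMeasure_classEvent_le (hinj : Set.InjOn μ M)
    (hχ : ∀ u ∈ movedPairs π₀ M μ, ∀ v ∈ movedPairs π₀ M μ, (conflictGraph π₀ μ).Adj u v →
      χ u ≠ χ v) (hp0 : ∀ i j, 0 ≤ p i j) (hs0 : 0 ≤ s) (t : Fin 3) {θ : ℝ} (hθ : 0 ≤ θ)
    (τ : ℝ) :
    coordMeasure n p s (classEvent π₀ M μ χ t τ) ≤
      ENNReal.ofReal (Real.exp (-(θ * τ) +
        (#(mismatches π₀ M μ) * (Real.exp (2 * θ) * maxProb p * s ^ 2) +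
          #(mismatches π₀ M μ) * n * (Real.exp (6 * θ) * maxProb p ^ 2 * s ^ 2)))) :=
  (measure_le_sum_indicator_le_of_iIndepSet (fun _ => (Set.toFinite _).measurableSet)
    (iIndepSet_edgeEvent_classPairs hinj hχ p s t)
    (fun q _ => by unfold pairWeight; split_ifs <;> norm_num)
    (fun q _ => by have := maxProb_nonneg hp0; unfold edgeProbBound; split_ifs <;> positivity)
    (fun q _ => coordMeasure_edgeEvent_le hp0 hs0 q) hθ τ).trans <|
  ENNReal.ofReal_le_ofReal <| Real.exp_le_exp.2 <|
    (add_le_add_iff_left _).2 (sum_exp_mul_edgeProbBound_le hp0 t θ)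

end ColourClasses

end GraphMatching

open GraphMatching in
theorem weak_kcore_probability_bound_general
    (n : ℕ) (p : Fin n → Fin n → ℝ)
    (hp0 : ∀ i j, 0 ≤ p i j)
    (s : ℝ) (hs0 : 0 ≤ s)
    (π₀ : Equiv.Perm (Fin n))
    (M : Finset (Fin n)) (μ : Fin n → Fin n) (hinj : Set.InjOn μ M)
    (d : ℕ) (herr : (M.filter fun i => μ i ≠ π₀ i).card = d)
    (k : ℕ) (θ : ℝ) (hθ : 0 < θ) :
    (ProbabilityTheory.cond (CIRG n p s) {ω | ω.2 = π₀})
        {ω | k * d ≤ ∑ i ∈ M.filter fun i' => μ i' ≠ π₀ i', interDeg ω M μ i} ≤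
      ENNReal.ofReal
        (3 * Real.exp (-(d : ℝ) *
          (θ * k - Real.exp (2 * θ) * (⨆ e : Fin n × Fin n, p e.1 e.2) * s ^ 2 -
            n * Real.exp (6 * θ) * (⨆ e : Fin n × Fin n, p e.1 e.2) ^ 2 * s ^ 2))) := by
  obtain ⟨χ, hχ⟩ := (conflictGraph π₀ μ).exists_coloring_of_degree_le (movedPairs π₀ M μ)
    fun q _ => (card_le_card (filter_subset_filter _ (filter_subset _ _))).trans
      (card_conflictGraph_adj_le hinj q)
  have hclass : ∀ t, coordMeasure n p s (classEvent π₀ M μ χ t (k * d : ℕ)) ≤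
      ENNReal.ofReal (Real.exp (-(d : ℝ) * (θ * k - Real.exp (2 * θ) * maxProb p * s ^ 2 -
        n * Real.exp (6 * θ) * maxProb p ^ 2 * s ^ 2))) := fun t =>
    (coordMeasure_classEvent_le hinj hχ hp0 hs0 t hθ.le _).trans_eq <| by
      rw [mismatches, herr]
      push_cast
      ring_nf
  rw [cond_CIRG_apply]
  calc _ ≤ coordMeasure n p s (⋃ t, classEvent π₀ M μ χ t (k * d : ℕ)) :=
        measure_mono fun y hy => Set.mem_iUnion.2 (exists_mem_classEvent hinj χ y hy)
    _ ≤ ∑ t : Fin 3, _ := (measure_iUnion_fintype_le _ _).trans (sum_le_sum fun t _ => hclass t)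
    _ = _ := by
        rw [sum_const, card_univ, Fintype.card_fin, ENNReal.ofReal_mul (by norm_num)]
        simp [maxProb]

open GraphMatching in
/-- Lemma 10: conditionally on `π⋆ = π₀`, for a matching `(M, μ)`
making `d ≥ 1` errors, `P(f(μ) ≥ kd | π⋆ = π₀) ≤ 3 exp(−d(θk − e^{2θ} p_max s² −
n e^{6θ} p_max² s²))` for any `θ > 0`. -/
theorem weak_kcore_probability_bound
    (n : ℕ) (p : Fin n → Fin n → ℝ)
    (hsym : ∀ i j, p i j = p j i)
    (hp0 : ∀ i j, 0 ≤ p i j) (hp1 : ∀ i j, p i j ≤ 1)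
    (hdiag : ∀ i, p i i = 0)
    (s : ℝ) (hs0 : 0 ≤ s) (hs1 : s ≤ 1)
    (π₀ : Equiv.Perm (Fin n))
    (M : Finset (Fin n)) (μ : Fin n → Fin n) (hinj : Set.InjOn μ M)
    (d : ℕ) (hd : 1 ≤ d) (herr : (M.filter fun i => μ i ≠ π₀ i).card = d)
    (k : ℕ) (hk : 0 < k) (θ : ℝ) (hθ : 0 < θ) :
    (ProbabilityTheory.cond (CIRG n p s) {ω | ω.2 = π₀})
        {ω | k * d ≤ ∑ i ∈ M.filter fun i' => μ i' ≠ π₀ i', interDeg ω M μ i} ≤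
      ENNReal.ofReal
        (3 * Real.exp (-(d : ℝ) *
          (θ * k - Real.exp (2 * θ) * (⨆ e : Fin n × Fin n, p e.1 e.2) * s ^ 2 -
            n * Real.exp (6 * θ) * (⨆ e : Fin n × Fin n, p e.1 e.2) ^ 2 * s ^ 2))) :=
  weak_kcore_probability_bound_general n p hp0 s hs0 π₀ M μ hinj d herr k θ hθ
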